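/- Consider the planar engagement kinematics with a pursuer under true proportional navigation: constants V_T, γ_T, c, differentiable functions r, θ, γ_P, V_P : ℝ → ℝ and a control a : ℝ → ℝ satisfying, on an interval I, r' = V_T cos(γ_T − θ) − V_P cos δ, r·θ' = V_T sin(γ_T − θ) − V_P sin δ, γ_P' = a·cos δ / V_P, and V_P' = a·sin δ, where δ = γ_P − θ. Define V_r = V_T cos(γ_T − θ) − V_P cos δ, V_θ = V_T sin(γ_T − θ) − V_P sin δ, Q = V_θ² + V_r² + 2c·V_r, and t_go = −r·(V_r + 2c)/Q. Then at every t ∈ I with r(t) > 0, V_P(t) ≠ 0 and Q(t) ≠ 0, t_go is differentiable with t_go'(t) = −1 + 2c·V_θ(t)²·(V_r(t) + 2c)/Q(t)² − (2·(V_r(t) + 2c)·V_θ(t)·r(t)/Q(t)²)·a(t). -/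

import Mathlib

/-- Deviation angle `δ = γ_P − θ`. -/
noncomputable def devAngle (θ γP : ℝ → ℝ) (t : ℝ) : ℝ := γP t - θ t

/-- Relative velocity component along the line of sight (time-varying pursuer speed). -/
noncomputable def VradT (VT γT : ℝ) (θ γP VP : ℝ → ℝ) (t : ℝ) : ℝ :=
  VT * Real.cos (γT - θ t) - VP t * Real.cos (devAngle θ γP t)

/-- Relative velocity component across the line of sight (time-varying pursuer speed). -/
noncomputable def VlosT (VT γT : ℝ) (θ γP VP : ℝ → ℝ) (t : ℝ) : ℝ :=
  VT * Real.sin (γT - θ t) - VP t * Real.sin (devAngle θ γP t)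

/-- `Q = V_θ² + V_r² + 2c·V_r`. -/
noncomputable def Qtpn (VT γT c : ℝ) (θ γP VP : ℝ → ℝ) (t : ℝ) : ℝ :=
  VlosT VT γT θ γP VP t ^ 2 + VradT VT γT θ γP VP t ^ 2 + 2 * c * VradT VT γT θ γP VP t

/-- True-proportional-navigation time-to-go `t_go = −r (V_r + 2c)/Q`. -/
noncomputable def tgoTPN (VT γT c : ℝ) (r θ γP VP : ℝ → ℝ) (t : ℝ) : ℝ :=
  -(r t * (VradT VT γT θ γP VP t + 2 * c)) / Qtpn VT γT c θ γP VP t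

/-! Since the pursuer acceleration is perpendicular to the line of sight, along the kinematics
`V_r' = V_θ θ'` and `V_θ' = −V_r θ' − a`, so `Q' = 2c V_θ θ' − 2 V_θ a`. In the quotient rule for
`t_go` the line-of-sight rate then enters only through `r θ' = V_θ`. -/

open Real

section Kinematics

variable {VT γT : ℝ} {θ γP VP : ℝ → ℝ} {θ' γP' VP' t : ℝ}

theorem hasDerivAt_devAngle (hθ : HasDerivAt θ θ' t) (hγ : HasDerivAt γP γP' t) :
    HasDerivAt (devAngle θ γP) (γP' - θ') t :=
  hγ.sub hθ

theorem hasDerivAt_VradT (hθ : HasDerivAt θ θ' t) (hγ : HasDerivAt γP γP' t)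
    (hVP : HasDerivAt VP VP' t) :
    HasDerivAt (VradT VT γT θ γP VP)
      (VlosT VT γT θ γP VP t * θ' - VP' * cos (devAngle θ γP t)
        + VP t * γP' * sin (devAngle θ γP t)) t := by
  refine (((hθ.const_sub γT).cos.const_mul VT).sub
    (hVP.mul (hasDerivAt_devAngle hθ hγ).cos)).congr_deriv ?_
  simp only [VlosT]
  ring

theorem hasDerivAt_VlosT (hθ : HasDerivAt θ θ' t) (hγ : HasDerivAt γP γP' t)
    (hVP : HasDerivAt VP VP' t) :
    HasDerivAt (VlosT VT γT θ γP VP)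
      (-(VradT VT γT θ γP VP t * θ') - VP' * sin (devAngle θ γP t)
        - VP t * γP' * cos (devAngle θ γP t)) t := by
  refine (((hθ.const_sub γT).sin.const_mul VT).sub
    (hVP.mul (hasDerivAt_devAngle hθ hγ).sin)).congr_deriv ?_
  simp only [VradT]
  ring

variable {a : ℝ}

theorem hasDerivAt_VradT_of_perp (hθ : HasDerivAt θ θ' t)
    (hγ : HasDerivAt γP (a * cos (devAngle θ γP t) / VP t) t)
    (hVP : HasDerivAt VP (a * sin (devAngle θ γP t)) t) (hVP0 : VP t ≠ 0) :
    HasDerivAt (VradT VT γT θ γP VP) (VlosT VT γT θ γP VP t * θ') t := by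
  refine (hasDerivAt_VradT hθ hγ hVP).congr_deriv ?_
  field_simp
  ring

theorem hasDerivAt_VlosT_of_perp (hθ : HasDerivAt θ θ' t)
    (hγ : HasDerivAt γP (a * cos (devAngle θ γP t) / VP t) t)
    (hVP : HasDerivAt VP (a * sin (devAngle θ γP t)) t) (hVP0 : VP t ≠ 0) :
    HasDerivAt (VlosT VT γT θ γP VP) (-(VradT VT γT θ γP VP t * θ') - a) t := by
  refine (hasDerivAt_VlosT hθ hγ hVP).congr_deriv ?_
  field_simp
  linear_combination (-a) * sin_sq_add_cos_sq (devAngle θ γP t)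

theorem hasDerivAt_Qtpn {c Vr' Vθ' : ℝ} (hVr : HasDerivAt (VradT VT γT θ γP VP) Vr' t)
    (hVθ : HasDerivAt (VlosT VT γT θ γP VP) Vθ' t) :
    HasDerivAt (Qtpn VT γT c θ γP VP)
      (2 * VlosT VT γT θ γP VP t * Vθ' + 2 * (VradT VT γT θ γP VP t + c) * Vr') t := by
  refine (((hVθ.pow 2).add (hVr.pow 2)).add (hVr.const_mul (2 * c))).congr_deriv ?_
  push_cast
  ring

end Kinematics

/-- equation (23) of the paper: the derivative of the
true-proportional-navigation time-to-go along the engagement kinematics. -/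
theorem tgoTPN_deriv
    (VT γT c : ℝ) (I : Set ℝ) (r θ γP VP a θd : ℝ → ℝ)
    (hr : ∀ t ∈ I, HasDerivAt r (VradT VT γT θ γP VP t) t)
    (hθ : ∀ t ∈ I, HasDerivAt θ (θd t) t)
    (hθd : ∀ t ∈ I, r t * θd t = VlosT VT γT θ γP VP t)
    (hγ : ∀ t ∈ I, HasDerivAt γP (a t * Real.cos (devAngle θ γP t) / VP t) t)
    (hVP : ∀ t ∈ I, HasDerivAt VP (a t * Real.sin (devAngle θ γP t)) t) :
    ∀ t ∈ I, 0 < r t → VP t ≠ 0 → Qtpn VT γT c θ γP VP t ≠ 0 →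
      HasDerivAt (tgoTPN VT γT c r θ γP VP)
        (-1 + 2 * c * VlosT VT γT θ γP VP t ^ 2 * (VradT VT γT θ γP VP t + 2 * c)
              / Qtpn VT γT c θ γP VP t ^ 2
          - (2 * (VradT VT γT θ γP VP t + 2 * c) * VlosT VT γT θ γP VP t * r t
              / Qtpn VT γT c θ γP VP t ^ 2) * a t) t := by
  intro t ht _ hVP0 hQ0
  have hVr := hasDerivAt_VradT_of_perp (hθ t ht) (hγ t ht) (hVP t ht) hVP0 (VT := VT) (γT := γT)
  have hVθ := hasDerivAt_VlosT_of_perp (hθ t ht) (hγ t ht) (hVP t ht) hVP0 (VT := VT) (γT := γT)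
  have hQ := hasDerivAt_Qtpn (c := c) hVr hVθ
  refine (((hr t ht).mul (hVr.add_const (2 * c))).neg.div hQ hQ0).congr_deriv ?_
  simp only [Pi.neg_apply, Pi.mul_apply]
  set Vr := VradT VT γT θ γP VP t
  set Vθ := VlosT VT γT θ γP VP t
  set Q := Qtpn VT γT c θ γP VP t
  have hQt : Q = Vθ ^ 2 + Vr ^ 2 + 2 * c * Vr := rfl
  field_simp
  linear_combination (2 * c * Vθ * (Vr + 2 * c) - Vθ * Q) * hθd t ht + Q * hQt
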